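/- Let z ∈ Ĩ_n and w ∈ A(z). Then no i ∈ ℤ satisfies w⁻¹(i) > w⁻¹(i+1) > w⁻¹(i+2); that is, the string representation of any atom inverse is 321-avoiding at consecutive positions. -/

import Mathlib

open Finset

/-- `w` is an element of the affine symmetric group `S̃_n`: a bijection `ℤ → ℤ` with
`w (i + n) = w i + n` for all `i` and `∑_{i=1}^n w i = n (n+1)/2`. -/
def IsAffine (n : ℕ) (w : Equiv.Perm ℤ) : Prop :=
  (∀ i : ℤ, w (i + n) = w i + n) ∧ ∑ i ∈ Finset.Icc (1 : ℤ) (n : ℤ), (w i - i) = 0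

/-- The Coxeter length of `w ∈ S̃_n`: the number of inversions `(i, j)`, `i < j`,
`w i > w j`, counted up to the equivalence `(i,j) ∼ (i+n, j+n)` (representatives with
`i ∈ [n]`). -/
noncomputable def affLen (n : ℕ) (w : Equiv.Perm ℤ) : ℕ :=
  Nat.card {p : ℤ × ℤ // 1 ≤ p.1 ∧ p.1 ≤ (n : ℤ) ∧ p.1 < p.2 ∧ w p.2 < w p.1}

/-- The absolute length of an involution `z ∈ Ĩ_n`: the number of 2-cycles
`(i, j)` with `i < j = z i`, counted up to the equivalence `(i,j) ∼ (i+n, j+n)`. -/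
noncomputable def absLen (n : ℕ) (z : Equiv.Perm ℤ) : ℕ :=
  Nat.card {p : ℤ × ℤ // 1 ≤ p.1 ∧ p.1 ≤ (n : ℤ) ∧ p.1 < p.2 ∧ z p.1 = p.2}

/-- The underlying function of the reflection `t_{i j}`: it sends `i + m n ↦ j + m n` and
`j + m n ↦ i + m n` for all `m`, fixing everything else. -/
def tFun (n : ℕ) (i j x : ℤ) : ℤ :=
  if (n : ℤ) ∣ x - i then x + (j - i) else if (n : ℤ) ∣ x - j then x - (j - i) else x

theorem tFun_comp (n : ℕ) (i j x : ℤ) : tFun n j i (tFun n i j x) = x := by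
  unfold tFun
  by_cases h1 : (n : ℤ) ∣ x - i
  · rw [if_pos h1]
    have c1 : (n : ℤ) ∣ x + (j - i) - j := by
      have e : x + (j - i) - j = x - i := by ring
      rw [e]; exact h1
    rw [if_pos c1]; ring
  · rw [if_neg h1]
    by_cases h2 : (n : ℤ) ∣ x - j
    · rw [if_pos h2]
      have c1 : ¬ (n : ℤ) ∣ x - (j - i) - j := by
        intro hc
        apply h1
        have e : x - i = 2 * (x - j) - (x - (j - i) - j) := by ring
        rw [e]
        exact dvd_sub (Dvd.dvd.mul_left h2 2) hc
      have c2 : (n : ℤ) ∣ x - (j - i) - i := by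
        have e : x - (j - i) - i = x - j := by ring
        rw [e]; exact h2
      rw [if_neg c1, if_pos c2]; ring
    · simp only [if_neg h1, if_neg h2]

/-- The reflection `t_{i j} ∈ S̃_n`. -/
def tPerm (n : ℕ) (i j : ℤ) : Equiv.Perm ℤ :=
  ⟨tFun n i j, tFun n j i, fun x => tFun_comp n i j x, fun x => tFun_comp n j i x⟩

/-- The simple generator `s_i = t_{i, i+1} ∈ S̃_n`. -/
def sPerm (n : ℕ) (i : ℤ) : Equiv.Perm ℤ := tPerm n i (i + 1)

/-- `D` is the Demazure (0-Hecke) product on the affine symmetric group `S̃_n`: the unique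
associative product with `w ∘ s_i = w` if `ℓ(w s_i) < ℓ(w)` and `w ∘ s_i = w s_i` if
`ℓ(w s_i) > ℓ(w)`. -/
def IsDemazure (n : ℕ) (D : Equiv.Perm ℤ → Equiv.Perm ℤ → Equiv.Perm ℤ) : Prop :=
  (∀ u v w : Equiv.Perm ℤ, IsAffine n u → IsAffine n v → IsAffine n w →
    D (D u v) w = D u (D v w)) ∧
  (∀ u v : Equiv.Perm ℤ, IsAffine n u → IsAffine n v → IsAffine n (D u v)) ∧
  (∀ w : Equiv.Perm ℤ, IsAffine n w → D w 1 = w ∧ D 1 w = w) ∧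
  (∀ w : Equiv.Perm ℤ, IsAffine n w → ∀ i : ℤ,
    (affLen n (w * sPerm n i) < affLen n w → D w (sPerm n i) = w) ∧
    (affLen n w < affLen n (w * sPerm n i) → D w (sPerm n i) = w * sPerm n i))

/-- `w` is an atom of the involution `z ∈ Ĩ_n` (relative to the Demazure product `D`):
`w` has minimal length among all `v ∈ S̃_n` with `z = v⁻¹ ∘ v`. -/
def IsAtomOf (n : ℕ) (D : Equiv.Perm ℤ → Equiv.Perm ℤ → Equiv.Perm ℤ)
    (z w : Equiv.Perm ℤ) : Prop :=
  IsAffine n w ∧ D w⁻¹ w = z ∧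
    ∀ v : Equiv.Perm ℤ, IsAffine n v → D v⁻¹ v = z → affLen n w ≤ affLen n v

/-!
If `w⁻¹ (i+2) < w⁻¹ (i+1) < w⁻¹ i`, then `w = s_i s_{i+1} s_i r` with lengths adding up. As `w⁻¹`
has right descents at `i` and `i+1`, it absorbs these generators in the Demazure product, so
`w⁻¹ ∘ w = w⁻¹ ∘ r`. For the shorter `v = s_i w` one gets likewise
`v⁻¹ ∘ v = (v⁻¹ s_i) ∘ r = w⁻¹ ∘ r`, contradicting the minimality of `ℓ(w)`. For `n = 2` the
positions `i` and `i + 2` are congruent, so `w⁻¹ (i + 2) = w⁻¹ i + 2`.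

The length bookkeeping rests on `ℓ(s_j x) = ℓ(x) + 1` when `x⁻¹ j < x⁻¹ (j + 1)`, where left
multiplication by `s_j` adds a single translation orbit of inversions, and on `ℓ(x⁻¹) = ℓ(x)`,
which comes from the equivariant bijection `(p, q) ↦ (x q, x p)` between inversion sets.
-/

open Function

@[simp] lemma Equiv.Perm.apply_inv_self {α : Type*} (f : Equiv.Perm α) (a : α) : f (f⁻¹ a) = a :=
  f.apply_symm_apply a

@[simp] lemma Equiv.Perm.inv_apply_self {α : Type*} (f : Equiv.Perm α) (a : α) : f⁻¹ (f a) = a :=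
  f.symm_apply_apply a

/-- Membership in the extended affine symmetric group (no condition on `∑ (w i - i)`). -/
def IsExtAffine (n : ℕ) (w : Equiv.Perm ℤ) : Prop := ∀ i : ℤ, w (i + n) = w i + n

namespace IsExtAffine

variable {n : ℕ} {x y : Equiv.Perm ℤ}

lemma periodic_sub (hx : IsExtAffine n x) : Periodic (fun i => x i - i) n :=
  fun i => show x (i + n) - (i + n) = x i - i by rw [hx]; ring

lemma apply_add_zsmul (hx : IsExtAffine n x) (k i : ℤ) : x (i + k • (n : ℤ)) = x i + k • n := by
  linarith [hx.periodic_sub.zsmul k i]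

lemma apply_sub_eq_of_dvd (hx : IsExtAffine n x) {a b : ℤ} (h : (n : ℤ) ∣ a - b) :
    x a - a = x b - b := by
  obtain ⟨k, hk⟩ := h
  have e : a = b + k • (n : ℤ) := by rw [smul_eq_mul]; linarith
  rw [e, hx.apply_add_zsmul]
  ring

lemma dvd_apply_sub (hx : IsExtAffine n x) {a b : ℤ} (h : (n : ℤ) ∣ a - b) :
    (n : ℤ) ∣ x a - x b := by
  have := hx.apply_sub_eq_of_dvd h
  rwa [show x a - x b = a - b by linarith]

lemma inv (hx : IsExtAffine n x) : IsExtAffine n x⁻¹ := fun i =>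
  x.injective (by rw [hx]; simp)

lemma mul (hx : IsExtAffine n x) (hy : IsExtAffine n y) : IsExtAffine n (x * y) := fun i => by
  simp only [Equiv.Perm.mul_apply, hy i, hx (y i)]

lemma toIcoMod_apply_toIcoMod (hx : IsExtAffine n x) (hn : (0 : ℤ) < n) (b : ℤ) :
    toIcoMod hn 1 (x (toIcoMod hn 1 b)) = toIcoMod hn 1 (x b) := by
  have e : toIcoMod hn 1 b = b + (-toIcoDiv hn 1 b) • (n : ℤ) := by
    rw [neg_smul, ← sub_eq_add_neg]; rfl
  rw [e, hx.apply_add_zsmul, toIcoMod_add_zsmul]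

lemma sum_Icc_comp (hx : IsExtAffine n x) (hn : (0 : ℤ) < n) {g : ℤ → ℤ} (hg : Periodic g n) :
    ∑ i ∈ Icc 1 (n : ℤ), g (x i) = ∑ i ∈ Icc 1 (n : ℤ), g i := by
  have hmem : ∀ b, toIcoMod hn 1 b ∈ Icc 1 (n : ℤ) := fun b => by
    have := toIcoMod_mem_Ico hn 1 b
    rw [Set.mem_Ico] at this
    rw [mem_Icc]
    omega
  have hself : ∀ a ∈ Icc 1 (n : ℤ), toIcoMod hn 1 a = a := fun a ha => by
    rw [toIcoMod_eq_self, Set.mem_Ico]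
    rw [mem_Icc] at ha
    omega
  refine sum_nbij' (fun a => toIcoMod hn 1 (x a)) (fun a => toIcoMod hn 1 (x⁻¹ a))
    (fun a _ => hmem _) (fun a _ => hmem _) (fun a ha => ?_) (fun a ha => ?_) (fun a _ => ?_)
  · simp only [hx.inv.toIcoMod_apply_toIcoMod, Equiv.Perm.inv_apply_self]; exact hself a ha
  · simp only [hx.toIcoMod_apply_toIcoMod, Equiv.Perm.apply_inv_self]; exact hself a ha
  · rw [toIcoMod, hg.sub_zsmul_eq]

end IsExtAffine

lemma Int.eq_zero_of_dvd_of_lt {n d : ℤ} (h : n ∣ d) (h₁ : -n < d) (h₂ : d < n) : d = 0 :=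
  Int.eq_zero_of_abs_lt_dvd h (abs_lt.2 ⟨h₁, h₂⟩)

namespace IsAffine

variable {n : ℕ} {x y : Equiv.Perm ℤ}

lemma isExtAffine (hx : IsAffine n x) : IsExtAffine n x := hx.1

lemma mul (hn : (0 : ℤ) < n) (hx : IsAffine n x) (hy : IsAffine n y) : IsAffine n (x * y) := by
  refine ⟨hx.isExtAffine.mul hy.isExtAffine, ?_⟩
  have hsplit : ∀ i, (x * y) i - i = (x (y i) - y i) + (y i - i) := fun i => by
    rw [Equiv.Perm.mul_apply]; ring
  rw [sum_congr rfl fun i _ => hsplit i, sum_add_distrib, hy.2, add_zero]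
  exact (hy.isExtAffine.sum_Icc_comp hn hx.isExtAffine.periodic_sub).trans hx.2

lemma inv (hn : (0 : ℤ) < n) (hx : IsAffine n x) : IsAffine n x⁻¹ := by
  refine ⟨hx.isExtAffine.inv, ?_⟩
  rw [← hx.isExtAffine.sum_Icc_comp hn hx.isExtAffine.inv.periodic_sub]
  simp only [Equiv.Perm.inv_apply_self]
  rw [← neg_eq_zero, ← hx.2, ← sum_neg_distrib]
  simp

end IsAffine

section SimpleReflection

variable {n : ℕ} {j a : ℤ}

lemma sPerm_apply (n : ℕ) (j a : ℤ) : sPerm n j a =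
    if (n : ℤ) ∣ a - j then a + 1 else if (n : ℤ) ∣ a - (j + 1) then a - 1 else a := by
  show tFun n j (j + 1) a = _
  unfold tFun
  split_ifs <;> ring

lemma not_dvd_sub_succ (hn : 2 ≤ n) (h : (n : ℤ) ∣ a - j) : ¬ (n : ℤ) ∣ a - (j + 1) := by
  intro h'
  have := Int.eq_zero_of_dvd_of_lt (dvd_sub h h') (by omega) (by omega)
  omega

lemma sPerm_of_dvd (h : (n : ℤ) ∣ a - j) : sPerm n j a = a + 1 := by
  rw [sPerm_apply, if_pos h]

lemma sPerm_of_dvd_succ (hn : 2 ≤ n) (h : (n : ℤ) ∣ a - (j + 1)) : sPerm n j a = a - 1 := by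
  rw [sPerm_apply, if_neg fun h' => not_dvd_sub_succ hn h' h, if_pos h]

lemma sPerm_of_not_dvd (h₁ : ¬ (n : ℤ) ∣ a - j) (h₂ : ¬ (n : ℤ) ∣ a - (j + 1)) :
    sPerm n j a = a := by
  rw [sPerm_apply, if_neg h₁, if_neg h₂]

lemma sPerm_self (n : ℕ) (j : ℤ) : sPerm n j j = j + 1 :=
  sPerm_of_dvd (by simp)

lemma sPerm_succ (hn : 2 ≤ n) (j : ℤ) : sPerm n j (j + 1) = j := by
  rw [sPerm_of_dvd_succ hn (by simp), add_sub_cancel_right]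

lemma sPerm_sPerm (hn : 2 ≤ n) (j a : ℤ) : sPerm n j (sPerm n j a) = a := by
  by_cases h₁ : (n : ℤ) ∣ a - j
  · rw [sPerm_of_dvd h₁, sPerm_of_dvd_succ hn (by convert h₁ using 1; ring), add_sub_cancel_right]
  by_cases h₂ : (n : ℤ) ∣ a - (j + 1)
  · rw [sPerm_of_dvd_succ hn h₂, sPerm_of_dvd (by convert h₂ using 1; ring), sub_add_cancel]
  rw [sPerm_of_not_dvd h₁ h₂, sPerm_of_not_dvd h₁ h₂]

lemma sPerm_mul_self (hn : 2 ≤ n) (j : ℤ) : sPerm n j * sPerm n j = 1 :=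
  Equiv.ext (sPerm_sPerm hn j)

lemma sPerm_inv (hn : 2 ≤ n) (j : ℤ) : (sPerm n j)⁻¹ = sPerm n j :=
  inv_eq_of_mul_eq_one_right (sPerm_mul_self hn j)

lemma sPerm_mul_sPerm_mul (hn : 2 ≤ n) (j : ℤ) (y : Equiv.Perm ℤ) :
    sPerm n j * (sPerm n j * y) = y := by
  rw [← mul_assoc, sPerm_mul_self hn, one_mul]

lemma inv_sPerm_mul_apply (hn : 2 ≤ n) (j : ℤ) (y : Equiv.Perm ℤ) (a : ℤ) :
    (sPerm n j * y)⁻¹ a = y⁻¹ (sPerm n j a) := by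
  rw [mul_inv_rev, sPerm_inv hn]
  rfl

lemma isExtAffine_sPerm (n : ℕ) (j : ℤ) : IsExtAffine n (sPerm n j) := fun a => by
  simp only [sPerm_apply, add_sub_right_comm a (n : ℤ), dvd_add_self_right]
  split_ifs <;> ring

lemma sPerm_sub_self (hn : 2 ≤ n) (j a : ℤ) : sPerm n j a - a =
    (if (n : ℤ) ∣ a - j then 1 else 0) - (if (n : ℤ) ∣ (a - 1) - j then 1 else 0) := by
  rw [show a - 1 - j = a - (j + 1) by ring, sPerm_apply]
  split_ifs with h₁ h₂ <;> first | exact absurd h₂ (not_dvd_sub_succ hn h₁) | ring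

lemma isAffine_sPerm (hn : 2 ≤ n) (j : ℤ) : IsAffine n (sPerm n j) := by
  refine ⟨isExtAffine_sPerm n j, ?_⟩
  have hper : Periodic (fun a : ℤ => if (n : ℤ) ∣ a - j then (1 : ℤ) else 0) n := fun a => by
    simp only [add_sub_right_comm a (n : ℤ), dvd_add_self_right]
  have hshift : IsExtAffine n (Equiv.subRight 1) := fun a => by
    simp only [Equiv.subRight_apply]; ring
  -- `sPerm n j a - a` telescopes over a period
  have hsum : ∑ a ∈ Icc 1 (n : ℤ), (if (n : ℤ) ∣ (a - 1) - j then (1 : ℤ) else 0) =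
      ∑ a ∈ Icc 1 (n : ℤ), if (n : ℤ) ∣ a - j then 1 else 0 :=
    hshift.sum_Icc_comp (by omega) hper
  rw [sum_congr rfl fun a _ => sPerm_sub_self hn j a, sum_sub_distrib, hsum, sub_self]

lemma sPerm_apply_triple (hn : 3 ≤ n) (i : ℤ) :
    sPerm n i i = i + 1 ∧ sPerm n i (i + 1) = i ∧ sPerm n i (i + 2) = i + 2 ∧
      sPerm n (i + 1) i = i ∧ sPerm n (i + 1) (i + 1) = i + 2 ∧
        sPerm n (i + 1) (i + 2) = i + 1 := by
  have hsmall : ∀ d : ℤ, (n : ℤ) ∣ d → -3 < d → d < 3 → d = 0 := fun d hd h₁ h₂ =>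
    Int.eq_zero_of_dvd_of_lt hd (by omega) (by omega)
  refine ⟨sPerm_self n i, sPerm_succ (by omega) i, sPerm_of_not_dvd ?_ ?_, sPerm_of_not_dvd ?_ ?_,
    by rw [sPerm_self]; ring, by rw [show i + 2 = i + 1 + 1 by ring, sPerm_succ (by omega)]⟩ <;>
    exact fun h => by have := hsmall _ h (by omega) (by omega); omega

lemma sPerm_cases (hn : 2 ≤ n) (j a : ℤ) :
    ((n : ℤ) ∣ a - j ∧ sPerm n j a = a + 1) ∨ ((n : ℤ) ∣ a - (j + 1) ∧ sPerm n j a = a - 1) ∨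
      sPerm n j a = a := by
  by_cases h₁ : (n : ℤ) ∣ a - j
  · exact Or.inl ⟨h₁, sPerm_of_dvd h₁⟩
  by_cases h₂ : (n : ℤ) ∣ a - (j + 1)
  · exact Or.inr (Or.inl ⟨h₂, sPerm_of_dvd_succ hn h₂⟩)
  · exact Or.inr (Or.inr (sPerm_of_not_dvd h₁ h₂))

lemma sPerm_lt_sPerm (hn : 2 ≤ n) {a b : ℤ} (hab : a < b)
    (hadj : ¬ ((n : ℤ) ∣ a - j ∧ b = a + 1)) : sPerm n j a < sPerm n j b := by
  by_contra hba
  rcases sPerm_cases hn j a with ⟨ha, hsa⟩ | ⟨-, hsa⟩ | hsa <;>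
    rcases sPerm_cases hn j b with ⟨-, hsb⟩ | ⟨hb, hsb⟩ | hsb
  any_goals omega
  · obtain rfl | rfl : b = a + 1 ∨ b = a + 2 := by omega
    · exact hadj ⟨ha, rfl⟩
    · have := Int.eq_zero_of_dvd_of_lt (dvd_sub hb ha) (by omega) (by omega)
      omega
  · rw [sPerm_of_dvd (by convert hb using 1; omega)] at hsa
    omega

lemma sPerm_lt_sPerm_iff (hn : 2 ≤ n) {a b : ℤ} (hab : ¬ ((n : ℤ) ∣ a - j ∧ b = a + 1))
    (hba : ¬ ((n : ℤ) ∣ b - j ∧ a = b + 1)) : sPerm n j a < sPerm n j b ↔ a < b := by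
  refine ⟨fun h => ?_, fun h => sPerm_lt_sPerm hn h hab⟩
  by_contra h'
  rcases (not_lt.1 h').eq_or_lt with rfl | hlt
  · exact lt_irrefl _ h
  · exact (sPerm_lt_sPerm hn hlt hba).asymm h

end SimpleReflection

def inversions (x : Equiv.Perm ℤ) : Set (ℤ × ℤ) := {p | p.1 < p.2 ∧ x p.2 < x p.1}

def window (n : ℕ) : Set (ℤ × ℤ) := {p | 1 ≤ p.1 ∧ p.1 ≤ n}

def diagShift (n : ℕ) (k : ℤ) (p : ℤ × ℤ) : ℤ × ℤ := (p.1 + k • (n : ℤ), p.2 + k • (n : ℤ))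

lemma affLen_eq_ncard (n : ℕ) (x : Equiv.Perm ℤ) :
    affLen n x = (window n ∩ inversions x).ncard := by
  show Set.ncard {p : ℤ × ℤ | 1 ≤ p.1 ∧ p.1 ≤ n ∧ p.1 < p.2 ∧ x p.2 < x p.1} = _
  congr 1
  ext p
  simp only [window, inversions, Set.mem_inter_iff, Set.mem_ofPred_eq, and_assoc]

section Window

variable {n : ℕ}

noncomputable def windowRep (hn : (0 : ℤ) < n) (p : ℤ × ℤ) : ℤ × ℤ :=
  diagShift n (-toIcoDiv hn 1 p.1) p

lemma windowRep_mem (hn : (0 : ℤ) < n) (p : ℤ × ℤ) : windowRep hn p ∈ window n := by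
  have := toIcoMod_mem_Ico hn 1 p.1
  rw [toIcoMod, Set.mem_Ico] at this
  simp only [windowRep, diagShift, window, Set.mem_ofPred_eq, neg_smul, ← sub_eq_add_neg]
  omega

lemma windowRep_diagShift (hn : (0 : ℤ) < n) (k : ℤ) (p : ℤ × ℤ) :
    windowRep hn (diagShift n k p) = windowRep hn p := by
  simp only [windowRep, diagShift]
  rw [toIcoDiv_add_zsmul]
  simp only [Prod.mk.injEq, smul_eq_mul]
  constructor <;> ring

lemma windowRep_of_mem (hn : (0 : ℤ) < n) {p : ℤ × ℤ} (hp : p ∈ window n) : windowRep hn p = p := by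
  have h0 : toIcoDiv hn 1 p.1 = 0 := by
    rw [toIcoDiv_eq_iff, zero_smul, sub_zero, Set.mem_Ico]
    exact ⟨hp.1, by linarith [hp.2]⟩
  simp [windowRep, diagShift, h0]

lemma ncard_window_inter_preimage (hn : (0 : ℤ) < n) {T : Set (ℤ × ℤ)}
    (hT : ∀ k, ∀ p ∈ T, diagShift n k p ∈ T) (e : ℤ × ℤ ≃ ℤ × ℤ)
    (he : ∀ k p, e (diagShift n k p) = diagShift n k (e p)) :
    (window n ∩ e ⁻¹' T).ncard = (window n ∩ T).ncard := by
  have he' : ∀ k p, e.symm (diagShift n k p) = diagShift n k (e.symm p) := fun k p =>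
    e.symm_apply_eq.2 (by rw [he, e.apply_symm_apply])
  have hrep : ∀ p, windowRep hn (e p) = e (diagShift n (-toIcoDiv hn 1 (e p).1) p) :=
    fun p => (he _ p).symm
  have hrep' : ∀ q,
      windowRep hn (e.symm q) = e.symm (diagShift n (-toIcoDiv hn 1 (e.symm q).1) q) :=
    fun q => (he' _ q).symm
  refine Set.BijOn.ncard_eq (Set.InvOn.bijOn (f := fun p => windowRep hn (e p))
    (f' := fun q => windowRep hn (e.symm q)) ⟨fun p hp => ?_, fun q hq => ?_⟩
    (fun p hp => ⟨windowRep_mem hn _, hT _ _ hp.2⟩) (fun q hq => ⟨windowRep_mem hn _, ?_⟩))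
  · simp only [hrep, e.symm_apply_apply, windowRep_diagShift, windowRep_of_mem hn hp.1]
  · simp only [hrep', e.apply_symm_apply, windowRep_diagShift, windowRep_of_mem hn hq.1]
  · simp only [Set.mem_preimage, hrep', e.apply_symm_apply]
    exact hT _ _ hq.2

end Window

namespace IsExtAffine

variable {n : ℕ} {x : Equiv.Perm ℤ} {j : ℤ}

lemma diagShift_mem_inversions (hx : IsExtAffine n x) (k : ℤ) {p : ℤ × ℤ}
    (hp : p ∈ inversions x) : diagShift n k p ∈ inversions x := by
  simp only [inversions, diagShift, Set.mem_ofPred_eq, hx.apply_add_zsmul] at hp ⊢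
  constructor <;> linarith [hp.1, hp.2]

lemma finite_window_inter_inversions (hx : IsExtAffine n x) (hn : (0 : ℤ) < n) :
    (window n ∩ inversions x).Finite := by
  obtain ⟨B, hB⟩ : ∃ B, ∀ i, |x i - i| ≤ B := ⟨∑ y ∈ Ico 0 (n : ℤ), |x y - y|, fun i => by
    obtain ⟨y, hy, e⟩ := hx.periodic_sub.exists_mem_Ico₀ hn i
    rw [show x i - i = x y - y from e]
    exact single_le_sum (f := fun y => |x y - y|) (fun _ _ => abs_nonneg _) (by simpa using hy)⟩
  refine ((Set.finite_Icc 1 (n : ℤ)).prod (Set.finite_Icc 1 (n + 2 * B))).subset ?_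
  rintro ⟨p, q⟩ ⟨⟨h₁, h₂⟩, h₃, h₄⟩
  have := abs_le.1 (hB p)
  have := abs_le.1 (hB q)
  simp only [Set.mem_prod, Set.mem_Icc] at h₃ h₄ ⊢
  omega

lemma affLen_inv (hx : IsExtAffine n x) (hn : (0 : ℤ) < n) : affLen n x⁻¹ = affLen n x := by
  let e : ℤ × ℤ ≃ ℤ × ℤ := (Equiv.prodComm ℤ ℤ).trans (Equiv.prodCongr x x)
  have hpre : e ⁻¹' inversions x⁻¹ = inversions x := by
    ext ⟨p, q⟩
    simp [e, inversions, and_comm]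
  have he : ∀ k p, e (diagShift n k p) = diagShift n k (e p) := fun k p => by
    simp only [e, diagShift, Equiv.trans_apply, Equiv.prodComm_apply, Prod.swap_prod_mk,
      Equiv.prodCongr_apply, Prod.map_apply, hx.apply_add_zsmul]
    rfl
  rw [affLen_eq_ncard, affLen_eq_ncard, ← hpre,
    ncard_window_inter_preimage hn (fun k _ hp => hx.inv.diagShift_mem_inversions k hp) e he]

lemma inversions_sPerm_mul (hx : IsExtAffine n x) (hn : 2 ≤ n) (h : x⁻¹ j < x⁻¹ (j + 1)) :
    inversions (sPerm n j * x) =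
      inversions x ∪ {p | (n : ℤ) ∣ x p.1 - j ∧ x p.2 = x p.1 + 1} := by
  have hgap : ∀ {p q}, (n : ℤ) ∣ x p - j → x q = x p + 1 → p < q := fun {p q} hp hq => by
    have h₁ := hx.inv.apply_sub_eq_of_dvd hp
    have h₂ := hx.inv.apply_sub_eq_of_dvd (a := x q) (b := j + 1)
      (by rw [hq]; convert hp using 1; ring)
    simp only [Equiv.Perm.inv_apply_self] at h₁ h₂
    omega
  ext ⟨p, q⟩
  simp only [inversions, Set.mem_union, Set.mem_ofPred_eq, Equiv.Perm.mul_apply]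
  by_cases hA : (n : ℤ) ∣ x p - j ∧ x q = x p + 1
  · have hsp : sPerm n j (x p) = x p + 1 := sPerm_of_dvd hA.1
    have hsq : sPerm n j (x q) = x p := by
      rw [sPerm_of_dvd_succ hn (by rw [hA.2]; convert hA.1 using 1; ring), hA.2,
        add_sub_cancel_right]
    rw [hsp, hsq]
    exact iff_of_true ⟨hgap hA.1 hA.2, by omega⟩ (Or.inr hA)
  by_cases hB : (n : ℤ) ∣ x q - j ∧ x p = x q + 1
  · have := hgap hB.1 hB.2
    exact iff_of_false (fun h => by omega) (by rintro (h | h) <;> omega)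
  rw [sPerm_lt_sPerm_iff hn hB hA]
  simp only [hA, or_false]

lemma exists_window_inter_eq_singleton (hx : IsExtAffine n x) (hn : (0 : ℤ) < n) (j : ℤ) :
    ∃ q, window n ∩ {p | (n : ℤ) ∣ x p.1 - j ∧ x p.2 = x p.1 + 1} = {q} := by
  set a₀ := toIcoMod hn 1 (x⁻¹ j)
  have ha₀ := toIcoMod_mem_Ico hn 1 (x⁻¹ j)
  have hd : (n : ℤ) ∣ a₀ - x⁻¹ j := by
    rw [toIcoMod_sub_self, smul_eq_mul]
    exact dvd_mul_left _ _
  rw [Set.mem_Ico] at ha₀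
  refine ⟨(a₀, x⁻¹ (x a₀ + 1)), Set.ext fun ⟨a, b⟩ => ⟨fun ⟨⟨h₁, h₂⟩, hab, hb⟩ => ?_, ?_⟩⟩
  · have hda : (n : ℤ) ∣ a - a₀ := by
      have := hx.inv.dvd_apply_sub hab
      simpa using dvd_sub this hd
    have ha : a = a₀ := by
      have := Int.eq_zero_of_dvd_of_lt hda (by omega) (by omega)
      omega
    subst ha
    simp only [Set.mem_singleton_iff, ← hb, Equiv.Perm.inv_apply_self]
  · rintro ⟨⟩
    refine ⟨⟨by omega, by omega⟩, by simpa using hx.dvd_apply_sub hd, by simp⟩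

lemma affLen_sPerm_mul_of_lt (hx : IsExtAffine n x) (hn : 2 ≤ n) (h : x⁻¹ j < x⁻¹ (j + 1)) :
    affLen n (sPerm n j * x) = affLen n x + 1 := by
  obtain ⟨q, hq⟩ := hx.exists_window_inter_eq_singleton (by omega) j
  have hq' : q ∉ window n ∩ inversions x := fun hmem => by
    have hqO : q ∈ window n ∩ {p | (n : ℤ) ∣ x p.1 - j ∧ x p.2 = x p.1 + 1} := by
      rw [hq]
      exact Set.mem_singleton q
    have := hqO.2.2
    exact absurd hmem.2.2 (by omega)
  rw [affLen_eq_ncard, affLen_eq_ncard, hx.inversions_sPerm_mul hn h,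
    Set.inter_union_distrib_left, hq, Set.union_singleton,
    Set.ncard_insert_of_notMem hq' (hx.finite_window_inter_inversions (by omega))]

lemma affLen_sPerm_mul_of_gt (hx : IsExtAffine n x) (hn : 2 ≤ n) (h : x⁻¹ (j + 1) < x⁻¹ j) :
    affLen n (sPerm n j * x) + 1 = affLen n x := by
  have := ((isExtAffine_sPerm n j).mul hx).affLen_sPerm_mul_of_lt hn (j := j)
    (by rwa [inv_sPerm_mul_apply hn, inv_sPerm_mul_apply hn, sPerm_self, sPerm_succ hn])
  rw [sPerm_mul_sPerm_mul hn] at this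
  exact this.symm

lemma affLen_mul_sPerm_of_lt (hx : IsExtAffine n x) (hn : 2 ≤ n) (h : x j < x (j + 1)) :
    affLen n (x * sPerm n j) = affLen n x + 1 := by
  have hinv : (x * sPerm n j)⁻¹ = sPerm n j * x⁻¹ := by rw [mul_inv_rev, sPerm_inv hn]
  rw [← (hx.mul (isExtAffine_sPerm n j)).affLen_inv (by omega), hinv,
    hx.inv.affLen_sPerm_mul_of_lt hn (by simpa using h), hx.affLen_inv (by omega)]

lemma affLen_mul_sPerm_of_gt (hx : IsExtAffine n x) (hn : 2 ≤ n) (h : x (j + 1) < x j) :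
    affLen n (x * sPerm n j) + 1 = affLen n x := by
  have hinv : (x * sPerm n j)⁻¹ = sPerm n j * x⁻¹ := by rw [mul_inv_rev, sPerm_inv hn]
  rw [← (hx.mul (isExtAffine_sPerm n j)).affLen_inv (by omega), hinv,
    hx.inv.affLen_sPerm_mul_of_gt hn (by simpa using h), hx.affLen_inv (by omega)]

lemma affLen_mul_sPerm_le (hx : IsExtAffine n x) (hn : 2 ≤ n) (j : ℤ) :
    affLen n (x * sPerm n j) ≤ affLen n x + 1 := by
  rcases lt_or_gt_of_ne (x.injective.ne (show j ≠ j + 1 by omega)) with h | h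
  · exact (hx.affLen_mul_sPerm_of_lt hn h).le
  · have := hx.affLen_mul_sPerm_of_gt hn h
    omega

end IsExtAffine

lemma IsAffine.eq_one_of_forall_lt_succ {n : ℕ} {x : Equiv.Perm ℤ} (hn : 0 < n)
    (hx : IsAffine n x) (h : ∀ k, x k < x (k + 1)) : x = 1 := by
  have hmono := strictMono_int_of_lt_succ h
  -- an increasing bijection of `ℤ` is a translation, and `∑ (x i - i) = 0` forces it to be trivial
  have hstep : ∀ k, x (k + 1) - (k + 1) = x k - k := fun k => by
    obtain ⟨m, hm⟩ := x.surjective (x k + 1)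
    have hkm : k < m := hmono.lt_iff_lt.1 (by omega)
    have := hmono.monotone (show k + 1 ≤ m by omega)
    have := h k
    omega
  have hconst : ∀ k, x k - k = x 0 := fun k => by
    simpa using (show Periodic (fun k => x k - k) 1 from hstep).int_mul_eq k
  have hsum := hx.2
  rw [sum_congr rfl fun i _ => hconst i, sum_const, Int.card_Icc, add_sub_cancel_right,
    Int.toNat_natCast, nsmul_eq_mul, mul_eq_zero] at hsum
  refine Equiv.ext fun k => ?_
  have := hconst k
  rcases hsum with h0 | h0 <;> simp only [Equiv.Perm.one_apply] <;> omega

namespace IsDemazure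

variable {n : ℕ} {D : Equiv.Perm ℤ → Equiv.Perm ℤ → Equiv.Perm ℤ} {x y : Equiv.Perm ℤ} {j : ℤ}

lemma sPerm_right_of_lt (hD : IsDemazure n D) (hn : 2 ≤ n) (hx : IsAffine n x)
    (h : x j < x (j + 1)) : D x (sPerm n j) = x * sPerm n j :=
  (hD.2.2.2 x hx j).2 (by rw [hx.isExtAffine.affLen_mul_sPerm_of_lt hn h]; omega)

lemma sPerm_right_of_gt (hD : IsDemazure n D) (hn : 2 ≤ n) (hx : IsAffine n x)
    (h : x (j + 1) < x j) : D x (sPerm n j) = x :=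
  (hD.2.2.2 x hx j).1 (by have := hx.isExtAffine.affLen_mul_sPerm_of_gt hn h; omega)

lemma sPerm_left_of_lt (hD : IsDemazure n D) (hn : 2 ≤ n) (hx : IsAffine n x)
    (h : x⁻¹ j < x⁻¹ (j + 1)) : D (sPerm n j) x = sPerm n j * x := by
  induction hℓ : affLen n x using Nat.strong_induction_on generalizing x with
  | _ N ih =>
  have hs := isAffine_sPerm hn j
  by_cases hinc : ∀ k, x k < x (k + 1)
  · rw [hx.eq_one_of_forall_lt_succ (by omega) hinc, mul_one]
    exact (hD.2.2.1 _ hs).1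
  obtain ⟨k, hk⟩ := not_forall.1 hinc
  have hk : x (k + 1) < x k := (not_lt.1 hk).lt_of_ne (x.injective.ne (by omega))
  set y := x * sPerm n k with hy_def
  have hy : IsAffine n y := hx.mul (by omega) (isAffine_sPerm hn k)
  have hyx : y * sPerm n k = x := by rw [hy_def, mul_assoc, sPerm_mul_self hn, mul_one]
  have hℓy : affLen n y + 1 = affLen n x := hx.isExtAffine.affLen_mul_sPerm_of_gt hn hk
  have hℓsx := hx.isExtAffine.affLen_sPerm_mul_of_lt hn h
  have hxy : D y (sPerm n k) = x := by
    rw [(hD.2.2.2 y hy k).2 (by rw [hyx]; omega), hyx]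
  -- `y` keeps the left ascent at `j`, otherwise `ℓ(s_j x) = ℓ(s_j y s_k) ≤ ℓ(y)`
  have hyj : y⁻¹ j < y⁻¹ (j + 1) := by
    rcases lt_or_gt_of_ne (y⁻¹.injective.ne (show j ≠ j + 1 by omega)) with hlt | hgt
    · exact hlt
    have h₁ := hy.isExtAffine.affLen_sPerm_mul_of_gt hn hgt
    have h₂ := (hs.isExtAffine.mul hy.isExtAffine).affLen_mul_sPerm_le hn k
    rw [mul_assoc, hyx] at h₂
    omega
  have hsy : IsAffine n (sPerm n j * y) := hs.mul (by omega) hy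
  have hℓsy := hy.isExtAffine.affLen_sPerm_mul_of_lt hn hyj
  calc D (sPerm n j) x = D (sPerm n j) (D y (sPerm n k)) := by rw [hxy]
    _ = D (D (sPerm n j) y) (sPerm n k) := (hD.1 _ _ _ hs hy (isAffine_sPerm hn k)).symm
    _ = D (sPerm n j * y) (sPerm n k) := by rw [ih _ (by omega) hy hyj rfl]
    _ = sPerm n j * x := by
      rw [(hD.2.2.2 _ hsy k).2 (by rw [mul_assoc, hyx]; omega), mul_assoc, hyx]

lemma sPerm_mul_right_of_gt (hD : IsDemazure n D) (hn : 2 ≤ n) (hx : IsAffine n x)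
    (hy : IsAffine n y) (hxj : x (j + 1) < x j) (hyj : y⁻¹ j < y⁻¹ (j + 1)) :
    D x (sPerm n j * y) = D x y := by
  rw [← hD.sPerm_left_of_lt hn hy hyj, ← hD.1 _ _ _ hx (isAffine_sPerm hn j) hy,
    hD.sPerm_right_of_gt hn hx hxj]

lemma sPerm_mul_right_of_lt (hD : IsDemazure n D) (hn : 2 ≤ n) (hx : IsAffine n x)
    (hy : IsAffine n y) (hxj : x j < x (j + 1)) (hyj : y⁻¹ j < y⁻¹ (j + 1)) :
    D x (sPerm n j * y) = D (x * sPerm n j) y := by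
  rw [← hD.sPerm_left_of_lt hn hy hyj, ← hD.1 _ _ _ hx (isAffine_sPerm hn j) hy,
    hD.sPerm_right_of_lt hn hx hxj]

end IsDemazure

section LongestElement

variable {n : ℕ} {D : Equiv.Perm ℤ → Equiv.Perm ℤ → Equiv.Perm ℤ} {x r : Equiv.Perm ℤ} {i : ℤ}

lemma IsDemazure.mul_sPerm_sPerm_sPerm_mul (hD : IsDemazure n D) (hn : 3 ≤ n)
    (hx : IsAffine n x) (hr : IsAffine n r) (hr₁ : r⁻¹ i < r⁻¹ (i + 1))
    (hr₂ : r⁻¹ (i + 1) < r⁻¹ (i + 2)) (hx₁ : x (i + 1) < x i) (hx₂ : x (i + 2) < x (i + 1)) :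
    D x (sPerm n i * (sPerm n (i + 1) * (sPerm n i * r))) = D x r := by
  obtain ⟨hs₀, hs₁, hs₂, ht₀, ht₁, -⟩ := sPerm_apply_triple hn i
  have hn2 : 2 ≤ n := by omega
  have hii : i + 1 + 1 = i + 2 := by ring
  have hm := (isAffine_sPerm hn2 i).mul (by omega) hr
  rw [hD.sPerm_mul_right_of_gt hn2 hx ((isAffine_sPerm hn2 (i + 1)).mul (by omega) hm) hx₁
      (by simpa only [inv_sPerm_mul_apply hn2, ht₀, hs₀, ht₁, hs₂] using hr₂),
    hD.sPerm_mul_right_of_gt hn2 hx hm (by rwa [hii])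
      (by simpa only [hii, inv_sPerm_mul_apply hn2, hs₁, hs₂] using hr₁.trans hr₂),
    hD.sPerm_mul_right_of_gt hn2 hx hr hx₁ hr₁]

lemma IsDemazure.mul_sPerm_sPerm_mul (hD : IsDemazure n D) (hn : 3 ≤ n)
    (hx : IsAffine n x) (hr : IsAffine n r) (hr₁ : r⁻¹ i < r⁻¹ (i + 1))
    (hr₂ : r⁻¹ (i + 1) < r⁻¹ (i + 2)) (hx₁ : x i < x (i + 1)) (hx₂ : x (i + 2) < x (i + 1)) :
    D x (sPerm n (i + 1) * (sPerm n i * r)) = D (x * sPerm n i) r := by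
  obtain ⟨-, hs₁, hs₂, -⟩ := sPerm_apply_triple hn i
  have hn2 : 2 ≤ n := by omega
  have hii : i + 1 + 1 = i + 2 := by ring
  rw [hD.sPerm_mul_right_of_gt hn2 hx ((isAffine_sPerm hn2 i).mul (by omega) hr) (by rwa [hii])
      (by simpa only [hii, inv_sPerm_mul_apply hn2, hs₁, hs₂] using hr₁.trans hr₂),
    hD.sPerm_mul_right_of_lt hn2 hx hr hx₁ hr₁]

lemma IsDemazure.inv_mul_self_sPerm_mul (hD : IsDemazure n D) (hn : 3 ≤ n) {w : Equiv.Perm ℤ}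
    (hw : IsAffine n w) (h₁ : w⁻¹ (i + 2) < w⁻¹ (i + 1)) (h₂ : w⁻¹ (i + 1) < w⁻¹ i) :
    D (sPerm n i * w)⁻¹ (sPerm n i * w) = D w⁻¹ w := by
  obtain ⟨hs₀, hs₁, hs₂, ht₀, ht₁, ht₂⟩ := sPerm_apply_triple hn i
  have hn2 : 2 ≤ n := by omega
  have hn0 : (0 : ℤ) < n := by omega
  have hs := isAffine_sPerm hn2 i
  have ht := isAffine_sPerm hn2 (i + 1)
  obtain ⟨r, rfl⟩ : ∃ r, w = sPerm n i * (sPerm n (i + 1) * (sPerm n i * r)) :=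
    ⟨sPerm n i * (sPerm n (i + 1) * (sPerm n i * w)), by simp only [sPerm_mul_sPerm_mul hn2]⟩
  have hr : IsAffine n r := by
    simpa only [sPerm_mul_sPerm_mul hn2] using hs.mul hn0 (ht.mul hn0 (hs.mul hn0 hw))
  have hr₁ : r⁻¹ i < r⁻¹ (i + 1) := by
    simpa only [inv_sPerm_mul_apply hn2, hs₀, hs₁, hs₂, ht₀, ht₂] using h₁
  have hr₂ : r⁻¹ (i + 1) < r⁻¹ (i + 2) := by
    simpa only [inv_sPerm_mul_apply hn2, hs₀, hs₁, hs₂, ht₀, ht₁] using h₂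
  set v := sPerm n (i + 1) * (sPerm n i * r)
  have hv : IsAffine n v := ht.mul hn0 (hs.mul hn0 hr)
  rw [sPerm_mul_sPerm_mul hn2]
  calc D v⁻¹ v = D (v⁻¹ * sPerm n i) r :=
        hD.mul_sPerm_sPerm_mul hn (hv.inv hn0) hr hr₁ hr₂
          (by simpa only [v, inv_sPerm_mul_apply hn2, hs₀, hs₂, ht₀, ht₁] using hr₂)
          (by simpa only [v, inv_sPerm_mul_apply hn2, hs₁, hs₂, ht₁, ht₂] using hr₁.trans hr₂)
    _ = D (sPerm n i * v)⁻¹ r := by rw [mul_inv_rev (sPerm n i) v, sPerm_inv hn2]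
    _ = D (sPerm n i * v)⁻¹ (sPerm n i * v) :=
        (hD.mul_sPerm_sPerm_sPerm_mul hn (hw.inv hn0) hr hr₁ hr₂ h₂ h₁).symm

end LongestElement

theorem atom_no_consecutive_321_general (n : ℕ) (hn : 2 ≤ n)
    (D : Equiv.Perm ℤ → Equiv.Perm ℤ → Equiv.Perm ℤ) (hD : IsDemazure n D)
    (z : Equiv.Perm ℤ)
    (w : Equiv.Perm ℤ) (hw : IsAtomOf n D z w) (i : ℤ) :
    ¬ (w⁻¹ (i + 2) < w⁻¹ (i + 1) ∧ w⁻¹ (i + 1) < w⁻¹ i) := by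
  rintro ⟨h₁, h₂⟩
  obtain ⟨hw, rfl, hmin⟩ := hw
  rcases hn.eq_or_lt with rfl | hn3
  · have := hw.isExtAffine.inv i
    push_cast at this
    omega
  · have hv := (isAffine_sPerm hn i).mul (by omega) hw
    have hℓ := hw.isExtAffine.affLen_sPerm_mul_of_gt hn h₂
    have := hmin _ hv (hD.inv_mul_self_sPerm_mul hn3 hw h₁ h₂)
    omega

/-- If `z ∈ Ĩ_n` and `w ∈ A(z)`, then no `i ∈ ℤ` has
`w⁻¹ i > w⁻¹ (i+1) > w⁻¹ (i+2)`: atom inverses are 321-avoiding at consecutive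
positions. -/
theorem atom_no_consecutive_321 (n : ℕ) (hn : 2 ≤ n)
    (D : Equiv.Perm ℤ → Equiv.Perm ℤ → Equiv.Perm ℤ) (hD : IsDemazure n D)
    (z : Equiv.Perm ℤ) (hz : IsAffine n z) (hzinv : ∀ x : ℤ, z (z x) = x)
    (w : Equiv.Perm ℤ) (hw : IsAtomOf n D z w) (i : ℤ) :
    ¬ (w⁻¹ (i + 2) < w⁻¹ (i + 1) ∧ w⁻¹ (i + 1) < w⁻¹ i) :=
  atom_no_consecutive_321_general n hn D hD z w hw i
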